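/- Let ω = e^{2πi/3}, N ≥ 4 and 2 ≤ j ≤ N−2. Let b ∈ ℂ^N satisfy Σ_{k=1}^N |b_k|² = 1, b_j ≠ 0 and b_{j+1} ≠ 0. Write b_j = r e^{iθ} with r > 0 and θ ∈ ℝ, define c_k = b_k e^{−iθ} for k ≠ j, and let p₁, q₁, p₂, q₂ be the unique real numbers with c_{j−1} = ω² p₁ + ω q₁ and c_{j+1} = ω² p₂ + ω q₂. Similarly write b_{j+1} = r̃ e^{iθ̃} with r̃ > 0, define c̃_k = b_k e^{−iθ̃} for k ≠ j+1, and let p̃₁, q̃₁, p̃₂, q̃₂ be the unique reals with c̃_j = ω² p̃₁ + ω q̃₁ and c̃_{j+2} = ω² p̃₂ + ω q̃₂. Then: r̃² = p₂² + q₂² − p₂q₂; e^{i(θ−θ̃)} = (ω p₂ + ω² q₂)/r̃; c̃_k = ((ω p₂ + ω² q₂)/r̃) · c_k for every k ∉ {j, j+1}; p̃₁ = (r/r̃) q₂ and q̃₁ = (r/r̃) p₂; and ω² p̃₂ + ω q̃₂ = ((ω p₂ + ω² q₂)/r̃) · c_{j+2}. -/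

import Mathlib

/-! STATEMENT 17: the change of coordinates between the frames adapted to the
periodic orbits `𝕋_j` and `𝕋_{j+1}`. -/

noncomputable section

open Complex

/-- `ω = e^{2πi/3}` -/
def omg : ℂ := Complex.exp (2 * Real.pi * Complex.I / 3)

/-!
The coordinate `c_{j+1} = r̃ e^{i(θ̃-θ)}` has modulus `r̃`, and its conjugate is `r̃ e^{i(θ-θ̃)}`;
since `conj ω = ω²`, conjugation swaps the two coordinates, which gives `ω p₂ + ω² q₂`.
Every `c̃_k` is `c_k` rotated by `e^{i(θ-θ̃)}`, in particular `c̃_j = r e^{i(θ-θ̃)}`, and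
`p̃₁, q̃₁` are read off by uniqueness of coordinates in the `ℝ`-basis `ω², ω`.
-/

open ComplexConjugate

theorem omg_eq_exp : omg = exp ((2 * Real.pi / 3 : ℝ) * I) := by
  rw [omg]; congr 1; push_cast; ring

theorem isPrimitiveRoot_omg : IsPrimitiveRoot omg 3 := by
  simpa [omg] using isPrimitiveRoot_exp 3 (by norm_num)

theorem omg_pow_three : omg ^ 3 = 1 := isPrimitiveRoot_omg.pow_eq_one

theorem omg_sq_add_omg_add_one : omg ^ 2 + omg + 1 = 0 := by
  have h := isPrimitiveRoot_omg.geom_sum_eq_zero (by norm_num)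
  simp only [Finset.sum_range_succ, Finset.sum_range_zero] at h
  linear_combination h

theorem norm_omg : ‖omg‖ = 1 := by
  rw [omg_eq_exp]; exact norm_exp_ofReal_mul_I _

theorem conj_omg : conj omg = omg ^ 2 := by
  rw [← inv_eq_conj norm_omg, inv_eq_of_mul_eq_one_right]
  rw [← pow_succ', omg_pow_three]

theorem omg_im_pos : 0 < omg.im := by
  rw [omg_eq_exp, exp_ofReal_mul_I_im]
  exact Real.sin_pos_of_pos_of_lt_pi (by positivity) (by linarith [Real.pi_pos])

theorem omg_coords_injective {p q p' q' : ℝ}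
    (h : omg ^ 2 * p + omg * q = omg ^ 2 * p' + omg * q') : p = p' ∧ q = q' := by
  -- `ω² = -1 - ω`, and the imaginary part then isolates the coefficient of `ω`
  have h0 : omg * ((q - q' - (p - p') : ℝ) : ℂ) - ((p - p' : ℝ) : ℂ) = 0 := by
    push_cast; linear_combination h - ((p : ℂ) - p') * omg_sq_add_omg_add_one
  have him := congrArg im h0
  have hre := congrArg re h0
  simp only [sub_im, sub_re, mul_im, mul_re, ofReal_im, ofReal_re, mul_zero, zero_add,
    sub_zero, zero_im, zero_re] at him hre
  have hqp : q - q' - (p - p') = 0 :=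
    (mul_eq_zero.mp him).resolve_left omg_im_pos.ne'
  rw [hqp, mul_zero, zero_sub, neg_eq_zero] at hre
  constructor <;> linarith

theorem conj_omg_coords (p q : ℝ) :
    conj (omg ^ 2 * p + omg * q) = omg * p + omg ^ 2 * q := by
  simp only [map_add, map_mul, map_pow, conj_omg, conj_ofReal]
  linear_combination (p : ℂ) * omg * omg_pow_three

theorem normSq_omg_coords (p q : ℝ) : normSq (omg ^ 2 * p + omg * q) = p ^ 2 + q ^ 2 - p * q := by
  apply ofReal_injective
  rw [← mul_conj, conj_omg_coords]
  push_cast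
  linear_combination ((p : ℂ) ^ 2 + q ^ 2 + p * q * omg) * omg_pow_three
    + (p : ℂ) * q * omg_sq_add_omg_add_one

theorem mul_exp_neg_mul_I_eq_exp_sub_mul (z : ℂ) (θ θ' : ℝ) :
    z * exp (-θ' * I) = exp ((θ - θ' : ℝ) * I) * (z * exp (-θ * I)) := by
  rw [mul_left_comm, ← exp_add]
  congr 2
  push_cast
  ring

theorem stmt17_general (N j : ℕ)
    (b : ℕ → ℂ)
    (r rt θ θt : ℝ) (hrt : 0 < rt)
    -- polar decompositions `b_j = r e^{iθ}`, `b_{j+1} = r̃ e^{iθ̃}` (in particular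
    -- `b_j ≠ 0` and `b_{j+1} ≠ 0`)
    (hbj : b j = (r : ℂ) * Complex.exp ((θ : ℂ) * Complex.I))
    (hbj1 : b (j + 1) = (rt : ℂ) * Complex.exp ((θt : ℂ) * Complex.I))
    (p₂ q₂ pt₁ qt₁ pt₂ qt₂ : ℝ)
    -- the coordinates adapted to the saddle `j` : `c_k = b_k e^{-iθ}`
    (h2 : b (j + 1) * Complex.exp (-(θ : ℂ) * Complex.I)
            = omg ^ 2 * (p₂ : ℂ) + omg * (q₂ : ℂ))
    -- the coordinates adapted to the saddle `j+1` : `c̃_k = b_k e^{-iθ̃}`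
    (h3 : b j * Complex.exp (-(θt : ℂ) * Complex.I)
            = omg ^ 2 * (pt₁ : ℂ) + omg * (qt₁ : ℂ))
    (h4 : b (j + 2) * Complex.exp (-(θt : ℂ) * Complex.I)
            = omg ^ 2 * (pt₂ : ℂ) + omg * (qt₂ : ℂ)) :
    rt ^ 2 = p₂ ^ 2 + q₂ ^ 2 - p₂ * q₂ ∧
    Complex.exp (((θ - θt : ℝ) : ℂ) * Complex.I)
      = (omg * (p₂ : ℂ) + omg ^ 2 * (q₂ : ℂ)) / (rt : ℂ) ∧
    (∀ k : ℕ, 1 ≤ k → k ≤ N → k ≠ j → k ≠ j + 1 →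
      b k * Complex.exp (-(θt : ℂ) * Complex.I)
        = ((omg * (p₂ : ℂ) + omg ^ 2 * (q₂ : ℂ)) / (rt : ℂ)) *
            (b k * Complex.exp (-(θ : ℂ) * Complex.I))) ∧
    pt₁ = (r / rt) * q₂ ∧ qt₁ = (r / rt) * p₂ ∧
    omg ^ 2 * (pt₂ : ℂ) + omg * (qt₂ : ℂ)
      = ((omg * (p₂ : ℂ) + omg ^ 2 * (q₂ : ℂ)) / (rt : ℂ)) *
          (b (j + 2) * Complex.exp (-(θ : ℂ) * Complex.I)) := by
  have hrt0 : (rt : ℂ) ≠ 0 := ofReal_ne_zero.mpr hrt.ne'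
  have hc_succ : (rt : ℂ) * exp ((θt - θ : ℝ) * I) = omg ^ 2 * p₂ + omg * q₂ := by
    rw [← h2, hbj1, mul_assoc, ← exp_add]
    congr 2
    push_cast
    ring
  have hc_conj : (rt : ℂ) * exp ((θ - θt : ℝ) * I) = omg * p₂ + omg ^ 2 * q₂ := by
    rw [← conj_omg_coords, ← hc_succ, map_mul, conj_ofReal, ← exp_conj, map_mul, conj_ofReal, conj_I]
    congr 2
    push_cast
    ring
  have hphase : exp ((θ - θt : ℝ) * I) = (omg * p₂ + omg ^ 2 * q₂) / rt := by
    rw [eq_div_iff hrt0, mul_comm, hc_conj]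
  have hframe (z : ℂ) : z * exp (-θt * I) = (omg * p₂ + omg ^ 2 * q₂) / rt * (z * exp (-θ * I)) :=
    hphase ▸ mul_exp_neg_mul_I_eq_exp_sub_mul z θ θt
  have hnorm : rt ^ 2 = p₂ ^ 2 + q₂ ^ 2 - p₂ * q₂ := by
    rw [← normSq_omg_coords, ← hc_succ, normSq_mul, normSq_ofReal, normSq_eq_norm_sq (exp _),
      norm_exp_ofReal_mul_I]
    ring
  obtain ⟨hpt₁, hqt₁⟩ : pt₁ = r / rt * q₂ ∧ qt₁ = r / rt * p₂ := by
    refine omg_coords_injective ?_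
    rw [← h3, hframe, hbj, mul_assoc, neg_mul, ← exp_add, add_neg_cancel, exp_zero]
    push_cast
    field_simp
    ring
  exact ⟨hnorm, hphase, fun k _ _ _ _ => hframe (b k), hpt₁, hqt₁, by rw [← h4, hframe]⟩

theorem stmt17 (N j : ℕ) (hN : 4 ≤ N) (hj1 : 2 ≤ j) (hj2 : j ≤ N - 2)
    (b : ℕ → ℂ)
    (hmass : (∑ k ∈ Finset.Icc 1 N, ‖b k‖ ^ 2) = 1)
    (r rt θ θt : ℝ) (hr : 0 < r) (hrt : 0 < rt)
    -- polar decompositions `b_j = r e^{iθ}`, `b_{j+1} = r̃ e^{iθ̃}` (in particular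
    -- `b_j ≠ 0` and `b_{j+1} ≠ 0`)
    (hbj : b j = (r : ℂ) * Complex.exp ((θ : ℂ) * Complex.I))
    (hbj1 : b (j + 1) = (rt : ℂ) * Complex.exp ((θt : ℂ) * Complex.I))
    (p₁ q₁ p₂ q₂ pt₁ qt₁ pt₂ qt₂ : ℝ)
    -- the coordinates adapted to the saddle `j` : `c_k = b_k e^{-iθ}`
    (h1 : b (j - 1) * Complex.exp (-(θ : ℂ) * Complex.I)
            = omg ^ 2 * (p₁ : ℂ) + omg * (q₁ : ℂ))
    (h2 : b (j + 1) * Complex.exp (-(θ : ℂ) * Complex.I)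
            = omg ^ 2 * (p₂ : ℂ) + omg * (q₂ : ℂ))
    -- the coordinates adapted to the saddle `j+1` : `c̃_k = b_k e^{-iθ̃}`
    (h3 : b j * Complex.exp (-(θt : ℂ) * Complex.I)
            = omg ^ 2 * (pt₁ : ℂ) + omg * (qt₁ : ℂ))
    (h4 : b (j + 2) * Complex.exp (-(θt : ℂ) * Complex.I)
            = omg ^ 2 * (pt₂ : ℂ) + omg * (qt₂ : ℂ)) :
    rt ^ 2 = p₂ ^ 2 + q₂ ^ 2 - p₂ * q₂ ∧
    Complex.exp (((θ - θt : ℝ) : ℂ) * Complex.I)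
      = (omg * (p₂ : ℂ) + omg ^ 2 * (q₂ : ℂ)) / (rt : ℂ) ∧
    (∀ k : ℕ, 1 ≤ k → k ≤ N → k ≠ j → k ≠ j + 1 →
      b k * Complex.exp (-(θt : ℂ) * Complex.I)
        = ((omg * (p₂ : ℂ) + omg ^ 2 * (q₂ : ℂ)) / (rt : ℂ)) *
            (b k * Complex.exp (-(θ : ℂ) * Complex.I))) ∧
    pt₁ = (r / rt) * q₂ ∧ qt₁ = (r / rt) * p₂ ∧
    omg ^ 2 * (pt₂ : ℂ) + omg * (qt₂ : ℂ)
      = ((omg * (p₂ : ℂ) + omg ^ 2 * (q₂ : ℂ)) / (rt : ℂ)) *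
          (b (j + 2) * Complex.exp (-(θ : ℂ) * Complex.I)) :=
  stmt17_general N j b r rt θ θt hrt hbj hbj1 p₂ q₂ pt₁ qt₁ pt₂ qt₂ h2 h3 h4

end
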